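/- Let Γ be a convex lattice polygon such that Γ' and Γ'' (first and second adjoints, convex hulls of interior lattice points iterated) are both nonempty, and let h be a nonzero integral linear functional. If h is tight for Γ' (max_{Γ'} h = max_{Γ''} h + 1 and min_{Γ'} h = min_{Γ''} h − 1), then h is tight for Γ. -/

import Mathlib

noncomputable section

/-- `p` is a lattice point of `ℤ² ⊂ ℝ²`. -/
def IsLat (p : ℝ × ℝ) : Prop := (∃ m : ℤ, p.1 = m) ∧ (∃ n : ℤ, p.2 = n)

/-- evaluation of the integral linear functional `h` at a point `p`. -/
def ev (h : ℤ × ℤ) (p : ℝ × ℝ) : ℝ := (h.1 : ℝ) * p.1 + (h.2 : ℝ) * p.2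

/-- the maximum of `h` on `Γ`. -/
def maxW (Γ : Set (ℝ × ℝ)) (h : ℤ × ℤ) : ℝ := sSup (ev h '' Γ)

/-- the minimum of `h` on `Γ`. -/
def minW (Γ : Set (ℝ × ℝ)) (h : ℤ × ℤ) : ℝ := sInf (ev h '' Γ)

/-- the width of `Γ` in direction `h`. -/
def width (Γ : Set (ℝ × ℝ)) (h : ℤ × ℤ) : ℝ := maxW Γ h - minW Γ h

/-- the adjoint polygon: convex hull of the interior lattice points of `Γ`. -/
def adjoint (Γ : Set (ℝ × ℝ)) : Set (ℝ × ℝ) :=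
  convexHull ℝ {p | p ∈ interior Γ ∧ IsLat p}

/-- `h` is tight for `Γ` (max-tight and min-tight with respect to the adjoint). -/
def Tight (Γ : Set (ℝ × ℝ)) (h : ℤ × ℤ) : Prop :=
  maxW Γ h = maxW (adjoint Γ) h + 1 ∧ minW Γ h = minW (adjoint Γ) h - 1

/-- the lattice width of `Γ`: minimal width over nonzero integral directions. -/
def latticeWidth (Γ : Set (ℝ × ℝ)) : ℝ := sInf (width Γ '' {h : ℤ × ℤ | h ≠ 0})

/-- a primitive integral direction. -/
def IsPrimitive (h : ℤ × ℤ) : Prop := Int.gcd h.1 h.2 = 1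

/-- the set of optimal (minimal width) nonzero directions of `Γ`. -/
def optimalSet (Γ : Set (ℝ × ℝ)) : Set (ℤ × ℤ) :=
  {h | h ≠ 0 ∧ width Γ h = latticeWidth Γ}

/-!
Normalise so that `h` is the height. Let `t = max_{Γ'} h`, attained at an interior lattice point
`u` of `Γ`, and `t - 1 = max_{Γ''} h`, attained at an interior lattice point `p` of `Γ'`. Since
`h(p - u) = -1`, the height `h` together with the functional `g` vanishing on `p - u` forms a
unimodular coordinate system. The point `u` is interior, so `max_Γ h ≥ t + 1`; suppose a vertex `v`
of `Γ` has height `M ≥ t + 2`. No lattice point of `int Γ` has height `t + 1`, so that slice of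
`int Γ` lies in a unit window `n < g < n + 1`. Every interior lattice point `z` of `Γ` sees `v`
through this window, and the resulting integer inequalities force all of them onto one closed
side of the line `u + ℝ (p - u)`, with the side fixed by the sign of `g v - n`. Then `Γ'` lies
in that closed half-plane while `p` is an interior point of `Γ'` on its boundary line.
The min-side of tightness is the max-side for `-h`.
-/

open Set

def interiorLattice (Γ : Set (ℝ × ℝ)) : Set (ℝ × ℝ) := {p | p ∈ interior Γ ∧ IsLat p}

lemma adjoint_eq_convexHull_interiorLattice (Γ : Set (ℝ × ℝ)) :
    adjoint Γ = convexHull ℝ (interiorLattice Γ) := rfl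

def evL (h : ℤ × ℤ) : StrongDual ℝ (ℝ × ℝ) :=
  (h.1 : ℝ) • ContinuousLinearMap.fst ℝ ℝ ℝ + (h.2 : ℝ) • ContinuousLinearMap.snd ℝ ℝ ℝ

@[simp]
lemma evL_apply (h : ℤ × ℤ) (p : ℝ × ℝ) : evL h p = ev h p := rfl

lemma ev_isLinearMap (h : ℤ × ℤ) : IsLinearMap ℝ (ev h) := (evL h).toLinearMap.isLinear

lemma ev_neg (h : ℤ × ℤ) (p : ℝ × ℝ) : ev (-h) p = -ev h p := by
  simp only [ev, Prod.fst_neg, Prod.snd_neg, Int.cast_neg]; ring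

lemma ev_add_smul (h : ℤ × ℤ) (a b : ℝ) (x y : ℝ × ℝ) :
    ev h (a • x + b • y) = a * ev h x + b * ev h y := by
  simp only [ev, Prod.fst_add, Prod.snd_add, Prod.smul_fst, Prod.smul_snd, smul_eq_mul]; ring

lemma evL_ne_zero {h : ℤ × ℤ} (hh : h ≠ 0) : evL h ≠ 0 := by
  intro h0
  have h1 : ev h (1, 0) = 0 := by rw [← evL_apply, h0]; rfl
  have h2 : ev h (0, 1) = 0 := by rw [← evL_apply, h0]; rfl
  simp only [ev, mul_one, mul_zero, add_zero, zero_add, Int.cast_eq_zero] at h1 h2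
  exact hh (Prod.ext h1 h2)

lemma exists_ev_lt_of_mem_interior {h : ℤ × ℤ} (hh : h ≠ 0) {A : Set (ℝ × ℝ)} {p : ℝ × ℝ}
    (hp : p ∈ interior A) : ∃ q ∈ A, ev h q < ev h p := by
  have hopen : IsOpen (evL h '' interior A) :=
    (evL h).isOpenMap_of_ne_zero (evL_ne_zero hh) _ isOpen_interior
  obtain ⟨ε, hε, hball⟩ := Metric.isOpen_iff.mp hopen _ ⟨p, hp, rfl⟩
  obtain ⟨q, hq, hqp⟩ : ev h p - ε / 2 ∈ evL h '' interior A := hball (by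
    rw [Metric.mem_ball, Real.dist_eq, evL_apply, sub_sub_cancel_left, abs_neg,
      abs_of_pos (half_pos hε)]
    exact half_lt_self hε)
  exact ⟨q, interior_subset hq, by rw [← evL_apply, hqp]; linarith⟩

lemma exists_ev_gt_of_mem_interior {h : ℤ × ℤ} (hh : h ≠ 0) {A : Set (ℝ × ℝ)} {p : ℝ × ℝ}
    (hp : p ∈ interior A) : ∃ q ∈ A, ev h p < ev h q := by
  obtain ⟨q, hq, hlt⟩ := exists_ev_lt_of_mem_interior (neg_ne_zero.mpr hh) hp
  exact ⟨q, hq, by rw [ev_neg, ev_neg] at hlt; linarith⟩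

lemma ev_le_of_mem_convexHull {h : ℤ × ℤ} {T : Set (ℝ × ℝ)} {c : ℝ}
    (hT : ∀ z ∈ T, ev h z ≤ c) {z : ℝ × ℝ} (hz : z ∈ convexHull ℝ T) : ev h z ≤ c :=
  convexHull_min hT (convex_halfSpace_le (ev_isLinearMap h) c) hz

lemma le_ev_of_mem_convexHull {h : ℤ × ℤ} {T : Set (ℝ × ℝ)} {c : ℝ}
    (hT : ∀ z ∈ T, c ≤ ev h z) {z : ℝ × ℝ} (hz : z ∈ convexHull ℝ T) : c ≤ ev h z :=
  convexHull_min hT (convex_halfSpace_ge (ev_isLinearMap h) c) hz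

lemma exists_isGreatest_ev_convexHull {T : Set (ℝ × ℝ)} (hT : T.Finite) (hne : T.Nonempty)
    (h : ℤ × ℤ) : ∃ q ∈ T, IsGreatest (ev h '' convexHull ℝ T) (ev h q) := by
  obtain ⟨q, hq, hmax⟩ := T.exists_max_image (ev h) hT hne
  exact ⟨q, hq, ⟨q, subset_convexHull ℝ T hq, rfl⟩, by
    rintro _ ⟨z, hz, rfl⟩; exact ev_le_of_mem_convexHull hmax hz⟩

lemma minW_eq_neg_maxW_neg (Γ : Set (ℝ × ℝ)) (h : ℤ × ℤ) : minW Γ h = -maxW Γ (-h) := by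
  rw [minW, maxW, Real.sInf_def, ← Set.image_neg_eq_neg, Set.image_image]
  simp only [ev_neg]

lemma IsLat.exists_ev_eq {q : ℝ × ℝ} (hq : IsLat q) (h : ℤ × ℤ) : ∃ z : ℤ, ev h q = z := by
  obtain ⟨⟨m, hm⟩, ⟨n, hn⟩⟩ := hq
  exact ⟨h.1 * m + h.2 * n, by rw [ev, hm, hn]; push_cast; ring⟩

lemma isLat_of_ev_eq_intCast {g h : ℤ × ℤ} (hdet : g.1 * h.2 - g.2 * h.1 = 1) {q : ℝ × ℝ}
    {a b : ℤ} (ha : ev g q = a) (hb : ev h q = b) : IsLat q := by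
  have hdetR : (g.1 : ℝ) * h.2 - g.2 * h.1 = 1 := by exact_mod_cast hdet
  refine ⟨⟨h.2 * a - g.2 * b, ?_⟩, ⟨g.1 * b - h.1 * a, ?_⟩⟩
  · push_cast; rw [← ha, ← hb, ev, ev]; linear_combination -q.1 * hdetR
  · push_cast; rw [← ha, ← hb, ev, ev]; linear_combination -q.2 * hdetR

lemma exists_det_eq_one_ev_eq {h : ℤ × ℤ} {u p : ℝ × ℝ} (hu : IsLat u) (hp : IsLat p)
    (hup : ev h u = ev h p + 1) : ∃ g : ℤ × ℤ, g.1 * h.2 - g.2 * h.1 = 1 ∧ ev g p = ev g u := by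
  obtain ⟨⟨u₁, hu₁⟩, ⟨u₂, hu₂⟩⟩ := hu
  obtain ⟨⟨p₁, hp₁⟩, ⟨p₂, hp₂⟩⟩ := hp
  refine ⟨(u₂ - p₂, p₁ - u₁), ?_, ?_⟩
  · have : ((h.1 * u₁ + h.2 * u₂ : ℤ) : ℝ) = ((h.1 * p₁ + h.2 * p₂ + 1 : ℤ) : ℝ) := by
      push_cast; rw [← hu₁, ← hu₂, ← hp₁, ← hp₂]; exact hup
    have := Int.cast_injective this
    dsimp only
    linear_combination this
  · simp only [ev, hu₁, hu₂, hp₁, hp₂]; push_cast; ring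

lemma IsCompact.finite_setOf_isLat {K : Set (ℝ × ℝ)} (hK : IsCompact K) :
    {p | p ∈ K ∧ IsLat p}.Finite := by
  let ι : ℤ × ℤ → ℝ × ℝ := Prod.map (↑) (↑)
  have hι : Topology.IsClosedEmbedding ι :=
    Int.isClosedEmbedding_coe_real.prodMap Int.isClosedEmbedding_coe_real
  refine ((isCompact_iff_finite.mp (hι.isCompact_preimage hK)).image ι).subset ?_
  rintro p ⟨hpK, ⟨m, hm⟩, ⟨n, hn⟩⟩
  have hp : ι (m, n) = p := Prod.ext hm.symm hn.symm
  exact ⟨(m, n), by rwa [Set.mem_preimage, hp], hp⟩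

lemma finite_interiorLattice_convexHull {T : Set (ℝ × ℝ)} (hT : T.Finite) :
    (interiorLattice (convexHull ℝ T)).Finite :=
  (hT.isCompact_convexHull ℝ).finite_setOf_isLat.subset fun _ hp => ⟨interior_subset hp.1, hp.2⟩

lemma Convex.exists_subset_Ioo_of_forall_intCast_notMem {s : Set ℝ} (hs : Convex ℝ s)
    (hZ : ∀ n : ℤ, (n : ℝ) ∉ s) : ∃ n : ℤ, s ⊆ Ioo (n : ℝ) (n + 1) := by
  rcases s.eq_empty_or_nonempty with rfl | ⟨x₀, hx₀⟩
  · exact ⟨0, empty_subset _⟩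
  have hconn := convex_iff_ordConnected.mp hs
  refine ⟨⌊x₀⌋, fun x hx => ⟨?_, ?_⟩⟩
  · by_contra hle
    exact hZ _ (hconn.out hx hx₀ ⟨not_lt.mp hle, Int.floor_le x₀⟩)
  · by_contra hle
    have h1 : x₀ ≤ ((⌊x₀⌋ + 1 : ℤ) : ℝ) := by push_cast; exact (Int.lt_floor_add_one x₀).le
    exact hZ _ (hconn.out hx₀ hx ⟨h1, by push_cast; exact not_lt.mp hle⟩)

lemma exists_mem_interior_ev_eq {Γ : Set (ℝ × ℝ)} (hΓ : Convex ℝ Γ) {z v : ℝ × ℝ}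
    (hz : z ∈ interior Γ) (hv : v ∈ Γ) (g h : ℤ × ℤ) {c : ℝ} (hzc : ev h z < c)
    (hcv : c < ev h v) :
    ∃ w ∈ interior Γ, ev h w = c ∧
      (ev h v - ev h z) * ev g w = (ev h v - c) * ev g z + (c - ev h z) * ev g v := by
  have hD : 0 < ev h v - ev h z := by linarith
  set θ := (c - ev h z) / (ev h v - ev h z)
  have hθ : θ * (ev h v - ev h z) = c - ev h z := div_mul_cancel₀ _ hD.ne'
  have hθ1 : θ < 1 := (div_lt_one hD).mpr (by linarith)
  refine ⟨(1 - θ) • z + θ • v, hΓ.combo_interior_self_mem_interior hz hv (by linarith)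
    (div_nonneg (by linarith) hD.le) (by ring), ?_, ?_⟩
  · rw [ev_add_smul]; linear_combination hθ
  · rw [ev_add_smul]; linear_combination (ev g v - ev g z) * hθ

lemma exists_ev_mem_Ioo_of_forall_ev_ne {Γ : Set (ℝ × ℝ)} (hΓ : Convex ℝ Γ) {g h : ℤ × ℤ}
    (hdet : g.1 * h.2 - g.2 * h.1 = 1) {c : ℤ} (hc : ∀ z ∈ interiorLattice Γ, ev h z ≠ c) :
    ∃ n : ℤ, ∀ w ∈ interior Γ, ev h w = c → n < ev g w ∧ ev g w < n + 1 := by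
  have hs : Convex ℝ (ev g '' (interior Γ ∩ {w | ev h w = c})) :=
    (hΓ.interior.inter (convex_hyperplane (ev_isLinearMap h) _)).is_linear_image
      (ev_isLinearMap g)
  obtain ⟨n, hn⟩ := hs.exists_subset_Ioo_of_forall_intCast_notMem (by
    rintro m ⟨w, ⟨hw, hwc⟩, hwm⟩
    exact hc w ⟨hw, isLat_of_ev_eq_intCast hdet hwm hwc⟩ hwc)
  exact ⟨n, fun w hw hwc => hn ⟨w, ⟨hw, hwc⟩, rfl⟩⟩

/-- The segment from a point `z = (a, b)` of `int Γ` to `v = (V, M) ∈ Γ`, in the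
coordinates `(g, h)`, crosses the height `c` inside the window `(n, n + 1)`. -/
lemma window_bounds {Γ : Set (ℝ × ℝ)} (hΓ : Convex ℝ Γ) {g h : ℤ × ℤ} {c n : ℤ}
    (hn : ∀ w ∈ interior Γ, ev h w = c → n < ev g w ∧ ev g w < n + 1)
    {v z : ℝ × ℝ} {V M a b : ℤ} (hv : v ∈ Γ) (hvg : ev g v = V) (hvh : ev h v = M)
    (hz : z ∈ interior Γ) (hza : ev g z = a) (hzb : ev h z = b) (hbc : b < c) (hcM : c < M) :
    (M - b) * n < (M - c) * a + (c - b) * V ∧ (M - c) * a + (c - b) * V < (M - b) * (n + 1) := by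
  have hbc' : (b : ℝ) < c := by exact_mod_cast hbc
  have hcM' : (c : ℝ) < M := by exact_mod_cast hcM
  obtain ⟨w, hw, hwh, hwg⟩ :=
    exists_mem_interior_ev_eq hΓ hz hv g h (by rwa [hzb]) (by rwa [hvh])
  obtain ⟨hnw, hwn⟩ := hn w hw hwh
  rw [hvh, hza, hzb, hvg] at hwg
  have hMb : (0 : ℝ) < M - b := by linarith
  constructor
  · have := mul_lt_mul_of_pos_left hnw hMb
    exact_mod_cast (by linarith : ((M - b) * n : ℝ) < (M - c) * a + (c - b) * V)
  · have := mul_lt_mul_of_pos_left hwn hMb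
    exact_mod_cast (by linarith : ((M - c) * a + (c - b) * V : ℝ) < (M - b) * (n + 1))

/-- Combines the `window_bounds` of `u = (U, c - 1)` and of `z = (a, b)`. -/
lemma side_of_window_bounds {M c n U V a b : ℤ} (hcM : c < M) (hbc : b < c)
    (hu : (M - c + 1) * n < (M - c) * U + V ∧ (M - c) * U + V < (M - c + 1) * (n + 1))
    (hz : (M - b) * n < (M - c) * a + (c - b) * V ∧
      (M - c) * a + (c - b) * V < (M - b) * (n + 1)) :
    (a < U → n < V) ∧ (U < a → V ≤ n) := by
  constructor
  · intro haU
    by_contra hV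
    nlinarith [mul_nonneg (by omega : (0 : ℤ) ≤ c - 1 - b) (sub_nonneg.mpr (not_lt.mp hV)),
      mul_nonneg (by omega : (0 : ℤ) ≤ M - c) (by omega : (0 : ℤ) ≤ U - 1 - a)]
  · intro hUa
    by_contra hV
    nlinarith [mul_nonneg (by omega : (0 : ℤ) ≤ c - 1 - b) (by omega : (0 : ℤ) ≤ V - n - 1),
      mul_nonneg (by omega : (0 : ℤ) ≤ M - c) (by omega : (0 : ℤ) ≤ a - U - 1)]

lemma interiorLattice_one_side {Γ : Set (ℝ × ℝ)} (hΓ : Convex ℝ Γ) {g h : ℤ × ℤ}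
    (hdet : g.1 * h.2 - g.2 * h.1 = 1) {t : ℤ} (htop : ∀ z ∈ interiorLattice Γ, ev h z ≤ t)
    {u v : ℝ × ℝ} (hu : u ∈ interiorLattice Γ) (hut : ev h u = t) (hv : v ∈ Γ) (hvl : IsLat v)
    (hvt : t + 1 < ev h v) :
    (∀ z ∈ interiorLattice Γ, ev g u ≤ ev g z) ∨ (∀ z ∈ interiorLattice Γ, ev g z ≤ ev g u) := by
  obtain ⟨M, hM⟩ := hvl.exists_ev_eq h
  obtain ⟨V, hV⟩ := hvl.exists_ev_eq g
  obtain ⟨U, hU⟩ := hu.2.exists_ev_eq g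
  have hMt : t + 1 < M := by exact_mod_cast hM ▸ hvt
  obtain ⟨n, hn⟩ := exists_ev_mem_Ioo_of_forall_ev_ne hΓ hdet (c := t + 1) fun z hz hzc => by
    linarith [htop z hz, (by exact_mod_cast hzc : ev h z = t + 1)]
  obtain ⟨hu₁, hu₂⟩ := window_bounds hΓ hn hv hV hM hu.1 hU hut (lt_add_one t) hMt
  have hside : ∀ z ∈ interiorLattice Γ, ∀ a : ℤ, ev g z = a →
      (a < U → n < V) ∧ (U < a → V ≤ n) := by
    intro z hz a ha
    obtain ⟨b, hb⟩ := hz.2.exists_ev_eq h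
    have hbt : b < t + 1 := Int.lt_add_one_iff.mpr (by exact_mod_cast hb ▸ htop z hz)
    exact side_of_window_bounds hMt hbt ⟨by linarith, by linarith⟩
      (window_bounds hΓ hn hv hV hM hz.1 ha hb hbt hMt)
  by_cases hVn : V ≤ n
  · left
    intro z hz
    obtain ⟨a, ha⟩ := hz.2.exists_ev_eq g
    rw [hU, ha, Int.cast_le]
    exact not_lt.mp fun haU => hVn.not_gt ((hside z hz a ha).1 haU)
  · right
    intro z hz
    obtain ⟨a, ha⟩ := hz.2.exists_ev_eq g
    rw [hU, ha, Int.cast_le]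
    exact not_lt.mp fun hUa => hVn ((hside z hz a ha).2 hUa)

lemma ev_le_add_one_of_mem_interiorLattice_adjoint {Γ : Set (ℝ × ℝ)} (hΓ : Convex ℝ Γ)
    {h : ℤ × ℤ} {t : ℤ} (htop : ∀ z ∈ interiorLattice Γ, ev h z ≤ t) {u p v : ℝ × ℝ}
    (hu : u ∈ interiorLattice Γ) (hut : ev h u = t) (hp : p ∈ interiorLattice (adjoint Γ))
    (hpt : ev h u = ev h p + 1) (hv : v ∈ Γ) (hvl : IsLat v) : ev h v ≤ t + 1 := by
  obtain ⟨g, hdet, hgp⟩ := exists_det_eq_one_ev_eq hu.2 hp.2 hpt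
  have hg : g ≠ 0 := by rintro rfl; simp at hdet
  by_contra! hvt
  rcases interiorLattice_one_side hΓ hdet htop hu hut hv hvl hvt with hside | hside
  · obtain ⟨q, hq, hlt⟩ := exists_ev_lt_of_mem_interior hg hp.1
    linarith [le_ev_of_mem_convexHull hside hq]
  · obtain ⟨q, hq, hlt⟩ := exists_ev_gt_of_mem_interior hg hp.1
    linarith [ev_le_of_mem_convexHull hside hq]

theorem maxW_convexHull_eq_maxW_adjoint_add_one {S : Set (ℝ × ℝ)} (hfin : S.Finite)
    (hlat : ∀ p ∈ S, IsLat p) (hint : (interiorLattice (adjoint (convexHull ℝ S))).Nonempty)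
    {h : ℤ × ℤ}
    (hmax : maxW (adjoint (convexHull ℝ S)) h = maxW (adjoint (adjoint (convexHull ℝ S))) h + 1) :
    maxW (convexHull ℝ S) h = maxW (adjoint (convexHull ℝ S)) h + 1 := by
  set Γ := convexHull ℝ S
  have hΓ'ne : (interiorLattice Γ).Nonempty := by
    obtain ⟨p, hp, -⟩ := hint
    exact convexHull_nonempty_iff.mp ⟨p, interior_subset hp⟩
  have hSne : S.Nonempty := by
    obtain ⟨p, hp, -⟩ := hΓ'ne
    exact convexHull_nonempty_iff.mp ⟨p, interior_subset hp⟩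
  have hΓ'fin := finite_interiorLattice_convexHull hfin
  obtain ⟨v, hvS, hv⟩ := exists_isGreatest_ev_convexHull hfin hSne h
  obtain ⟨u, hu, hu'⟩ := exists_isGreatest_ev_convexHull hΓ'fin hΓ'ne h
  obtain ⟨p, hp, hp'⟩ :=
    exists_isGreatest_ev_convexHull (finite_interiorLattice_convexHull hΓ'fin) hint h
  rw [adjoint_eq_convexHull_interiorLattice] at hmax ⊢
  rw [maxW, maxW, hv.csSup_eq, hu'.csSup_eq]
  rw [maxW, maxW, hu'.csSup_eq, adjoint_eq_convexHull_interiorLattice, hp'.csSup_eq] at hmax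
  have hh : h ≠ 0 := by rintro rfl; simp [ev] at hmax
  obtain ⟨t, ht⟩ := hu.2.exists_ev_eq h
  obtain ⟨M, hM⟩ := (hlat v hvS).exists_ev_eq h
  have hle : (M : ℝ) ≤ t + 1 := hM ▸ ev_le_add_one_of_mem_interiorLattice_adjoint
    (convex_convexHull ℝ S) (fun z hz => ht ▸ hu'.2 ⟨z, subset_convexHull ℝ _ hz, rfl⟩) hu ht hp
    hmax (subset_convexHull ℝ S hvS) (hlat v hvS)
  have hlt : (t : ℝ) < M := by
    obtain ⟨q, hqΓ, hq⟩ := exists_ev_gt_of_mem_interior hh hu.1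
    exact ht ▸ hM ▸ hq.trans_le (hv.2 ⟨q, hqΓ, rfl⟩)
  rw [ht, hM]
  exact_mod_cast le_antisymm (by exact_mod_cast hle) (Int.add_one_le_of_lt (by exact_mod_cast hlt))

theorem stmt_3_general (S : Set (ℝ × ℝ)) (hfin : S.Finite)
    (hlat : ∀ p ∈ S, IsLat p)
    (Γ : Set (ℝ × ℝ)) (hΓ : Γ = convexHull ℝ S)
    (hint2 : {p | p ∈ interior (adjoint Γ) ∧ IsLat p}.Nonempty)
    (h : ℤ × ℤ)
    (ht : Tight (adjoint Γ) h) :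
    Tight Γ h := by
  subst hΓ
  obtain ⟨hmax, hmin⟩ := ht
  refine ⟨maxW_convexHull_eq_maxW_adjoint_add_one hfin hlat hint2 hmax, ?_⟩
  simp only [minW_eq_neg_maxW_neg] at hmin ⊢
  linarith [maxW_convexHull_eq_maxW_adjoint_add_one hfin hlat hint2 (h := -h) (by linarith)]

/-- if `h` is tight for the adjoint `Γ'` (with respect to `Γ''`),
then `h` is tight for `Γ`. -/
theorem stmt_3 (S : Set (ℝ × ℝ)) (hfin : S.Finite) (hne : S.Nonempty)
    (hlat : ∀ p ∈ S, IsLat p)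
    (Γ : Set (ℝ × ℝ)) (hΓ : Γ = convexHull ℝ S)
    (hint1 : {p | p ∈ interior Γ ∧ IsLat p}.Nonempty)
    (hint2 : {p | p ∈ interior (adjoint Γ) ∧ IsLat p}.Nonempty)
    (h : ℤ × ℤ) (hh : h ≠ 0)
    (ht : Tight (adjoint Γ) h) :
    Tight Γ h :=
  stmt_3_general S hfin hlat Γ hΓ hint2 h ht
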